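/- arXiv:1601.07581 — 2 statements merged into one kernel-verified Lean document; each statement's English description precedes it below -/
import Mathlib

section
/- Let X be an mm-space and κ > 0. For every ρ > Sep(X; κ/2, κ/2), every 1-Lipschitz function f : X → ℝ, and every median m of f, one has μ_X({x ∈ X : |f(x) − m| ≥ ρ}) ≤ κ. In other words, the Lévy radius LeRad(X; −κ) is at most Sep(X; κ/2, κ/2). -/
open MeasureTheory Metric

/-- The distance between two subsets of a metric space:
`dist(A,B) = inf { dist a b | a ∈ A, b ∈ B }` (with `sInf ∅ = 0`). -/
noncomputable def setDist {X : Type*} [PseudoMetricSpace X] (A B : Set X) : ℝ :=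
  sInf (Set.image2 dist A B)

/-- The separation distance `Sep(X; κ₀, …, κ_k)` of a metric measure space:
the supremum of `min_{i ≠ j} dist(A_i, A_j)` over all tuples of Borel sets
`A₀, …, A_k` with `μ (A i) ≥ κ i` (with `sSup ∅ = 0`). -/
noncomputable def sep {X : Type*} [MetricSpace X] [MeasurableSpace X]
    (μ : Measure X) {k : ℕ} (κ : Fin (k + 1) → ℝ) : ℝ :=
  sSup { r | ∃ A : Fin (k + 1) → Set X, (∀ i, MeasurableSet (A i)) ∧
    (∀ i, κ i ≤ (μ (A i)).toReal) ∧
    r = sInf { d | ∃ i j, i ≠ j ∧ d = setDist (A i) (A j) } }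

/-- `m` is a median of `f` w.r.t. the probability measure `μ`:
`μ {f ≥ m} ≥ 1/2` and `μ {f ≤ m} ≥ 1/2`. -/
def IsMedian {X : Type*} [MeasurableSpace X] (μ : Measure X) (f : X → ℝ) (m : ℝ) : Prop :=
  (1 : ℝ) / 2 ≤ (μ { x | m ≤ f x }).toReal ∧ (1 : ℝ) / 2 ≤ (μ { x | f x ≤ m }).toReal

lemma setDist_nonneg {X : Type*} [PseudoMetricSpace X] (A B : Set X) : 0 ≤ setDist A B :=
  Real.sInf_nonneg (by rintro d ⟨a, ha, b, hb, rfl⟩; exact dist_nonneg)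

lemma sep_aux_bddAbove {X : Type*} [MetricSpace X] [MeasurableSpace X] [OpensMeasurableSpace X]
    (μ : Measure X) [IsProbabilityMeasure μ] {κ : ℝ} (hκ : 0 < κ) :
    BddAbove { r | ∃ A : Fin 2 → Set X, (∀ i, MeasurableSet (A i)) ∧
      (∀ i, κ / 2 ≤ (μ (A i)).toReal) ∧
      r = sInf { d | ∃ i j, i ≠ j ∧ d = setDist (A i) (A j) } } := by
  obtain ⟨x₀, -⟩ := nonempty_of_measure_ne_zero (μ := μ) (s := Set.univ)
    (by simp)
  -- find a ball capturing measure > 1 - κ/2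
  have htend : Filter.Tendsto (fun n : ℕ => (μ (ball x₀ n)).toReal) Filter.atTop
      (nhds (μ Set.univ).toReal) := by
    have h1 : Filter.Tendsto (fun n : ℕ => μ (ball x₀ n)) Filter.atTop
        (nhds (μ (⋃ n : ℕ, ball x₀ n))) :=
      tendsto_measure_iUnion_atTop (fun n m hnm => ball_subset_ball (by exact_mod_cast hnm))
    rw [iUnion_ball_nat] at h1
    exact (ENNReal.tendsto_toReal (measure_ne_top μ _)).comp h1
  have hμuniv : (μ Set.univ).toReal = 1 := by simp
  rw [hμuniv] at htend
  obtain ⟨n, hn⟩ := (htend.eventually (eventually_gt_nhds (by linarith : 1 - κ/2 < 1))).exists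
  have hcompl : (μ (ball x₀ n)ᶜ).toReal < κ / 2 := by
    rw [prob_compl_eq_one_sub measurableSet_ball,
      ENNReal.toReal_sub_of_le prob_le_one ENNReal.one_ne_top]
    · simp only [ENNReal.toReal_one]; linarith
  refine ⟨2 * n, ?_⟩
  rintro r ⟨A, hAm, hA, rfl⟩
  -- each A i meets the ball
  have hmeet : ∀ i, (A i ∩ ball x₀ n).Nonempty := by
    intro i
    rw [Set.inter_comm, ← Set.not_disjoint_iff_nonempty_inter]
    intro hdisj
    have hsub : A i ⊆ (ball x₀ n)ᶜ := (Set.disjoint_right.mp hdisj : _)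
    have : (μ (A i)).toReal ≤ (μ (ball x₀ n)ᶜ).toReal :=
      ENNReal.toReal_mono (measure_ne_top μ _) (measure_mono hsub)
    have := hA i
    linarith
  obtain ⟨a, ha, hab⟩ := hmeet 0
  obtain ⟨b, hb, hbb⟩ := hmeet 1
  have hbdd : BddBelow { d | ∃ i j : Fin 2, i ≠ j ∧ d = setDist (A i) (A j) } :=
    ⟨0, by rintro d ⟨i, j, -, rfl⟩; exact setDist_nonneg _ _⟩
  have h01 : setDist (A 0) (A 1) ∈ { d | ∃ i j : Fin 2, i ≠ j ∧ d = setDist (A i) (A j) } :=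
    ⟨0, 1, by decide, rfl⟩
  refine (csInf_le hbdd h01).trans ?_
  have : setDist (A 0) (A 1) ≤ dist a b :=
    csInf_le ⟨0, by rintro d ⟨a', _, b', _, rfl⟩; exact dist_nonneg⟩
      ⟨a, ha, b, hb, rfl⟩
  have htri : dist a b ≤ dist a x₀ + dist x₀ b := dist_triangle a x₀ b
  have h1 : dist a x₀ < n := mem_ball.mp hab
  have h2 : dist x₀ b < n := by rw [dist_comm]; exact mem_ball.mp hbb
  linarith

lemma sep_ge {X : Type*} [MetricSpace X] [MeasurableSpace X] [OpensMeasurableSpace X]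
    (μ : Measure X) [IsProbabilityMeasure μ] {κ ρ : ℝ} (hκ : 0 < κ)
    (A B : Set X) (hAm : MeasurableSet A) (hBm : MeasurableSet B)
    (hA : κ / 2 ≤ (μ A).toReal) (hB : κ / 2 ≤ (μ B).toReal)
    (hAne : A.Nonempty) (hBne : B.Nonempty)
    (hd : ∀ a ∈ A, ∀ b ∈ B, ρ ≤ dist a b) :
    ρ ≤ sep (k := 1) μ (fun _ => κ / 2) := by
  set C : Fin 2 → Set X := fun i => if i = 0 then A else B with hC
  have hC0 : C 0 = A := rfl
  have hC1 : C 1 = B := rfl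
  have hdist : ∀ i j : Fin 2, i ≠ j → ρ ≤ setDist (C i) (C j) := by
    intro i j hij
    have key : ∀ (P Q : Set X), P.Nonempty → Q.Nonempty →
        (∀ p ∈ P, ∀ q ∈ Q, ρ ≤ dist p q) → ρ ≤ setDist P Q := by
      intro P Q hP hQ h
      obtain ⟨p, hp⟩ := hP; obtain ⟨q, hq⟩ := hQ
      exact le_csInf ⟨dist p q, p, hp, q, hq, rfl⟩
        (by rintro d ⟨a, ha, b, hb, rfl⟩; exact h a ha b hb)
    fin_cases i <;> fin_cases j <;> simp_all [hC0, hC1] <;>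
      first
      | exact key A B hAne hBne hd
      | exact key B A hBne hAne fun b hb a ha => (dist_comm b a) ▸ hd a ha b hb
  have hmem : sInf { d | ∃ i j : Fin 2, i ≠ j ∧ d = setDist (C i) (C j) } ∈
      { r | ∃ A : Fin 2 → Set X, (∀ i, MeasurableSet (A i)) ∧
        (∀ i, κ / 2 ≤ (μ (A i)).toReal) ∧
        r = sInf { d | ∃ i j, i ≠ j ∧ d = setDist (A i) (A j) } } := by
    refine ⟨C, fun i => ?_, fun i => ?_, rfl⟩
    · fin_cases i <;> simpa [hC0, hC1]
    · fin_cases i <;> simpa [hC0, hC1]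
  have hρr : ρ ≤ sInf { d | ∃ i j : Fin 2, i ≠ j ∧ d = setDist (C i) (C j) } :=
    le_csInf ⟨setDist (C 0) (C 1), 0, 1, by decide, rfl⟩
      (by rintro d ⟨i, j, hij, rfl⟩; exact hdist i j hij)
  exact hρr.trans (le_csSup (sep_aux_bddAbove μ hκ) hmem)

/-- Let `X` be an mm-space and `κ > 0`. For every
`ρ > Sep(X; κ/2, κ/2)`, every 1-Lipschitz `f : X → ℝ` and every median `m` of `f`,
one has `μ {x | |f x - m| ≥ ρ} ≤ κ`; i.e. the Lévy radius `LeRad(X; -κ)` is at most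
`Sep(X; κ/2, κ/2)`. -/
theorem levyRadius_le_sep {X : Type*} [MetricSpace X] [CompleteSpace X]
    [TopologicalSpace.SeparableSpace X] [MeasurableSpace X] [BorelSpace X]
    (μ : Measure X) [IsProbabilityMeasure μ] (κ : ℝ) (hκ : 0 < κ)
    (ρ : ℝ) (hρ : sep (k := 1) μ (fun _ => κ / 2) < ρ)
    (f : X → ℝ) (hf : LipschitzWith 1 f) (m : ℝ) (hm : IsMedian μ f m) :
    (μ { x | ρ ≤ |f x - m| }).toReal ≤ κ := by
  have hone : (μ { x | ρ ≤ |f x - m| }).toReal ≤ 1 := by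
    have := ENNReal.toReal_mono (measure_ne_top μ Set.univ)
      (measure_mono (Set.subset_univ { x | ρ ≤ |f x - m| }))
    simpa using this
  rcases le_or_gt 1 κ with h1 | h1
  · linarith
  by_contra hcon
  push_neg at hcon
  have hfc : Continuous f := hf.continuous
  have hρ0 : 0 < ρ := by
    refine lt_of_le_of_lt ?_ hρ
    apply Real.sSup_nonneg
    rintro r ⟨A, -, -, rfl⟩
    exact le_csInf ⟨setDist (A 0) (A 1), 0, 1, by decide, rfl⟩
      (by rintro d ⟨i, j, -, rfl⟩; exact setDist_nonneg _ _)
  set Bp : Set X := { x | m + ρ ≤ f x } with hBp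
  set Bm : Set X := { x | f x ≤ m - ρ } with hBm
  have hBpm : MeasurableSet Bp := (isClosed_le continuous_const hfc).measurableSet
  have hBmm : MeasurableSet Bm := (isClosed_le hfc continuous_const).measurableSet
  have hsub : { x | ρ ≤ |f x - m| } ⊆ Bp ∪ Bm := by
    intro x hx
    rcases le_abs.mp (show ρ ≤ |f x - m| from hx) with h | h
    · left; simp only [hBp, Set.mem_setOf_eq]; linarith
    · right; simp only [hBm, Set.mem_setOf_eq]; linarith
  have hadd : (μ { x | ρ ≤ |f x - m| }).toReal ≤ (μ Bp).toReal + (μ Bm).toReal := by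
    have h2 : μ { x | ρ ≤ |f x - m| } ≤ μ Bp + μ Bm :=
      (measure_mono hsub).trans (measure_union_le _ _)
    calc (μ { x | ρ ≤ |f x - m| }).toReal ≤ (μ Bp + μ Bm).toReal :=
          ENNReal.toReal_mono (by finiteness) h2
      _ = (μ Bp).toReal + (μ Bm).toReal :=
          ENNReal.toReal_add (measure_ne_top μ _) (measure_ne_top μ _)
  have hmed1 : κ / 2 ≤ (μ { x | m ≤ f x }).toReal := by
    refine le_trans (by linarith) hm.1
  have hmed2 : κ / 2 ≤ (μ { x | f x ≤ m }).toReal := by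
    refine le_trans (by linarith) hm.2
  have hmedm1 : MeasurableSet { x | m ≤ f x } := (isClosed_le continuous_const hfc).measurableSet
  have hmedm2 : MeasurableSet { x | f x ≤ m } := (isClosed_le hfc continuous_const).measurableSet
  have hmedne1 : { x | m ≤ f x }.Nonempty :=
    nonempty_of_measure_ne_zero (by intro h; rw [h] at hmed1; simp at hmed1; linarith)
  have hmedne2 : { x | f x ≤ m }.Nonempty :=
    nonempty_of_measure_ne_zero (by intro h; rw [h] at hmed2; simp at hmed2; linarith)
  have hlip : ∀ a b : X, |f a - f b| ≤ dist a b := by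
    intro a b
    simpa [Real.dist_eq] using hf.dist_le_mul a b
  rcases le_or_gt (κ / 2) ((μ Bp).toReal) with hcase | hcase
  · have hBpne : Bp.Nonempty :=
      nonempty_of_measure_ne_zero (by intro h; rw [h] at hcase; simp at hcase; linarith)
    have : ρ ≤ sep (k := 1) μ (fun _ => κ / 2) := by
      refine sep_ge μ hκ Bp { x | f x ≤ m } hBpm hmedm2 hcase hmed2 hBpne hmedne2 ?_
      intro a ha b hb
      have h1 : m + ρ ≤ f a := ha
      have h2 : f b ≤ m := hb
      calc ρ ≤ |f a - f b| := le_abs.mpr (Or.inl (by linarith))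
        _ ≤ dist a b := hlip a b
    linarith
  · have hBmge : κ / 2 ≤ (μ Bm).toReal := by linarith
    have hBmne : Bm.Nonempty :=
      nonempty_of_measure_ne_zero (by intro h; rw [h] at hBmge; simp at hBmge; linarith)
    have : ρ ≤ sep (k := 1) μ (fun _ => κ / 2) := by
      refine sep_ge μ hκ { x | m ≤ f x } Bm hmedm1 hBmm hmed1 hBmge hmedne1 hBmne ?_
      intro a ha b hb
      have h1 : m ≤ f a := ha
      have h2 : f b ≤ m - ρ := hb
      calc ρ ≤ |f a - f b| := le_abs.mpr (Or.inl (by linarith))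
        _ ≤ dist a b := hlip a b
    linarith
end

section
/- Let X be a complete separable metric space, let μ and ν be Borel probability measures on X, let δ > 0, and let π_0 be a δ-transportation from μ to ν with deficiency ε := 1 − π_0(X×X). If ε > 0, then the measure π := π_0 + ε^{−1}·(μ − (pr_1)_*π_0) ⊗ (ν − (pr_2)_*π_0) is a coupling of μ and ν (i.e., a Borel probability measure on X×X with first marginal μ and second marginal ν) and satisfies π({(x,y) ∈ X×X : dist(x,y) ≤ δ}) ≥ 1 − ε. -/
open MeasureTheory

/-- Let `μ, ν` be Borel probability measures on a complete separable
metric space `X`, `δ > 0`, and let `π₀` be a `δ`-transportation from `μ` to `ν`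
(a finite Borel measure on `X × X` with `(pr₁)_* π₀ ≤ μ`, `(pr₂)_* π₀ ≤ ν`,
supported in `{(x,y) | dist x y ≤ δ}`) with deficiency `ε := 1 - π₀(X × X) > 0`.
Then `π := π₀ + ε⁻¹ • (μ - (pr₁)_* π₀) ⊗ (ν - (pr₂)_* π₀)` is a coupling of `μ`
and `ν` and satisfies `π {(x,y) | dist x y ≤ δ} ≥ 1 - ε`. -/
theorem coupling_from_partial_transportation {X : Type*} [MetricSpace X]
    [CompleteSpace X] [TopologicalSpace.SeparableSpace X]
    [MeasurableSpace X] [BorelSpace X]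
    (μ ν : Measure X) [IsProbabilityMeasure μ] [IsProbabilityMeasure ν]
    (δ : ℝ) (hδ : 0 < δ)
    (π₀ : Measure (X × X)) [IsFiniteMeasure π₀]
    (hfst : π₀.map Prod.fst ≤ μ) (hsnd : π₀.map Prod.snd ≤ ν)
    (hδtrans : π₀ { p : X × X | δ < dist p.1 p.2 } = 0)
    (ε : ℝ) (hε : ε = 1 - (π₀ Set.univ).toReal) (hεpos : 0 < ε)
    (π : Measure (X × X))
    (hπ : π = π₀ + (ENNReal.ofReal ε)⁻¹ •
      ((μ - π₀.map Prod.fst).prod (ν - π₀.map Prod.snd))) :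
    π.map Prod.fst = μ ∧ π.map Prod.snd = ν ∧ IsProbabilityMeasure π ∧
      1 - ε ≤ (π { p : X × X | dist p.1 p.2 ≤ δ }).toReal := by
  have hm1 : π₀.map Prod.fst Set.univ = π₀ Set.univ := by
    rw [Measure.map_apply measurable_fst MeasurableSet.univ]; rfl
  have hm2 : π₀.map Prod.snd Set.univ = π₀ Set.univ := by
    rw [Measure.map_apply measurable_snd MeasurableSet.univ]; rfl
  haveI : IsFiniteMeasure (π₀.map Prod.fst) :=
    ⟨by rw [hm1]; exact measure_lt_top _ _⟩
  haveI : IsFiniteMeasure (π₀.map Prod.snd) :=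
    ⟨by rw [hm2]; exact measure_lt_top _ _⟩
  have hπ0ne : π₀ Set.univ ≠ ⊤ := measure_ne_top _ _
  have hεe : ENNReal.ofReal ε = 1 - π₀ Set.univ := by
    rw [hε, ENNReal.ofReal_sub _ ENNReal.toReal_nonneg, ENNReal.ofReal_one,
      ENNReal.ofReal_toReal hπ0ne]
  have h1univ : (μ - π₀.map Prod.fst) Set.univ = ENNReal.ofReal ε := by
    rw [Measure.sub_apply MeasurableSet.univ hfst, hm1, hεe,
      measure_univ]
  have h2univ : (ν - π₀.map Prod.snd) Set.univ = ENNReal.ofReal ε := by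
    rw [Measure.sub_apply MeasurableSet.univ hsnd, hm2, hεe,
      measure_univ]
  have hεne : ENNReal.ofReal ε ≠ 0 := by
    simp [ENNReal.ofReal_eq_zero, not_le, hεpos]
  have hεnt : ENNReal.ofReal ε ≠ ⊤ := ENNReal.ofReal_ne_top
  have hinv : (ENNReal.ofReal ε)⁻¹ * ENNReal.ofReal ε = 1 :=
    ENNReal.inv_mul_cancel hεne hεnt
  have hmapfst : π.map Prod.fst = μ := by
    rw [hπ, Measure.map_add _ _ measurable_fst, Measure.map_smul,
      Measure.map_fst_prod, h2univ, smul_smul, hinv, one_smul, add_comm,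
      Measure.sub_add_cancel_of_le hfst]
  have hmapsnd : π.map Prod.snd = ν := by
    rw [hπ, Measure.map_add _ _ measurable_snd, Measure.map_smul,
      Measure.map_snd_prod, h1univ, smul_smul, hinv, one_smul, add_comm,
      Measure.sub_add_cancel_of_le hsnd]
  have hprob : IsProbabilityMeasure π := by
    constructor
    have : π Set.univ = π.map Prod.fst Set.univ := by
      rw [Measure.map_apply measurable_fst MeasurableSet.univ]; rfl
    rw [this, hmapfst, measure_univ]
  refine ⟨hmapfst, hmapsnd, hprob, ?_⟩
  have hle : π₀ { p : X × X | dist p.1 p.2 ≤ δ } ≤ π { p : X × X | dist p.1 p.2 ≤ δ } := by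
    rw [hπ]; exact le_add_right le_rfl
  have hπ0set : π₀ { p : X × X | dist p.1 p.2 ≤ δ } = π₀ Set.univ := by
    have : Set.univ = { p : X × X | dist p.1 p.2 ≤ δ } ∪ { p : X × X | δ < dist p.1 p.2 } := by
      ext p; simp [le_or_gt]
    refine le_antisymm (measure_mono (Set.subset_univ _)) ?_
    calc π₀ Set.univ ≤ π₀ { p : X × X | dist p.1 p.2 ≤ δ } + π₀ { p : X × X | δ < dist p.1 p.2 } := by
          rw [this]; exact measure_union_le _ _
      _ = π₀ { p : X × X | dist p.1 p.2 ≤ δ } := by rw [hδtrans, add_zero]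
  have hπne : π { p : X × X | dist p.1 p.2 ≤ δ } ≠ ⊤ := measure_ne_top _ _
  have := ENNReal.toReal_mono hπne (hπ0set ▸ hle)
  linarith [this, hε]
end
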